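/- arXiv:math/0207015 — 2 statements merged into one kernel-verified Lean document; each statement's English description precedes it below -/
import Mathlib

section
/- Let k be a field of characteristic 3. If a binary sextic form F(x1, x2) over k satisfies F(−x1 + x2, −x1) = F(x1, x2) and F(x2, x1) = F(x1, x2), then F equals a6·x1^6 + a4·x1^4·x2^2 + (a4 + 2a6)·x1^3·x2^3 + a4·x1^2·x2^4 + a6·x2^6 for some a4, a6 ∈ k. -/
open MvPolynomial Finsupp

lemma dd_eq (i j i' j' : ℕ) :
    (Finsupp.single (0:Fin 2) i + Finsupp.single 1 j
      = Finsupp.single 0 i' + Finsupp.single 1 j') ↔ (i = i' ∧ j = j') := by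
  constructor
  · intro h
    have h0 := DFunLike.congr_fun h 0
    have h1 := DFunLike.congr_fun h 1
    simp [Finsupp.single_apply] at h0 h1
    exact ⟨h0, h1⟩
  · rintro ⟨rfl, rfl⟩; rfl

lemma CXpow_eq {k : Type*} [CommSemiring k] (a : k) (i j : ℕ) :
    (C a * (X 0 ^ i * X 1 ^ j) : MvPolynomial (Fin 2) k)
      = monomial (Finsupp.single 0 i + Finsupp.single 1 j) a := by
  simp [X_pow_eq_monomial, monomial_mul, C_mul_monomial]

lemma fin2_repr (m : Fin 2 →₀ ℕ) :
    m = Finsupp.single 0 (m 0) + Finsupp.single 1 (m 1) := by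
  ext a; fin_cases a <;> simp [Finsupp.single_apply]

set_option maxHeartbeats 2000000 in
/-- a binary sextic form over a field of characteristic 3 invariant under
`F(x1,x2) ↦ F(−x1 + x2, −x1)` and under `F(x1,x2) ↦ F(x2,x1)` equals
`a6·x1⁶ + a4·x1⁴x2² + (a4 + 2a6)·x1³x2³ + a4·x1²x2⁴ + a6·x2⁶`. -/
theorem stmt_14 {k : Type*} [Field k] [CharP k 3]
    (F : MvPolynomial (Fin 2) k) (hhom : F.IsHomogeneous 6)
    (hU : aeval ![-X 0 + X 1, -X 0] F = F)
    (hV : aeval ![X 1, X 0] F = F) :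
    ∃ a4 a6 : k,
      F = C a6 * X 0 ^ 6 + C a4 * X 0 ^ 4 * X 1 ^ 2 +
        C (a4 + 2 * a6) * X 0 ^ 3 * X 1 ^ 3 + C a4 * X 0 ^ 2 * X 1 ^ 4 +
        C a6 * X 1 ^ 6 := by
  obtain ⟨c0, c1, c2, c3, c4, c5, c6, hF⟩ :
      ∃ c0 c1 c2 c3 c4 c5 c6 : k,
        F = C c0 * (X 0 ^ 0 * X 1 ^ 6) + C c1 * (X 0 ^ 1 * X 1 ^ 5)
          + C c2 * (X 0 ^ 2 * X 1 ^ 4) + C c3 * (X 0 ^ 3 * X 1 ^ 3)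
          + C c4 * (X 0 ^ 4 * X 1 ^ 2) + C c5 * (X 0 ^ 5 * X 1 ^ 1)
          + C c6 * (X 0 ^ 6 * X 1 ^ 0) := by
    refine ⟨F.coeff (Finsupp.single 0 0 + Finsupp.single 1 6), F.coeff (Finsupp.single 0 1 + Finsupp.single 1 5), F.coeff (Finsupp.single 0 2 + Finsupp.single 1 4), F.coeff (Finsupp.single 0 3 + Finsupp.single 1 3), F.coeff (Finsupp.single 0 4 + Finsupp.single 1 2), F.coeff (Finsupp.single 0 5 + Finsupp.single 1 1), F.coeff (Finsupp.single 0 6 + Finsupp.single 1 0), ?_⟩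
    ext m
    simp only [coeff_add, CXpow_eq, coeff_monomial]
    by_cases hm : m 0 + m 1 = 6
    · rw [fin2_repr m]
      simp only [dd_eq]
      have h0 : m 0 ≤ 6 := by omega
      interval_cases h : m 0 <;>
        · have : m 1 = 6 - m 0 := by omega
          simp_all
    · have hz : F.coeff m = 0 := by
        apply hhom.coeff_eq_zero
        intro hdeg
        apply hm
        have : m.degree = m 0 + m 1 := by
          rw [Finsupp.degree_apply, Finset.sum_subset (Finset.subset_univ _), Fin.sum_univ_two]
          intro i _ hi
          simpa using (Finsupp.notMem_support_iff.mp hi)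
        omega
      rw [hz, fin2_repr m]
      simp only [dd_eq]
      split_ifs <;> first | omega | simp
  rw [hF] at hU hV
  simp only [map_add, map_mul, map_pow, aeval_C, aeval_X, Matrix.cons_val_zero,
    Matrix.cons_val_one, Matrix.head_cons, algebraMap_eq, map_neg] at hU hV
  have h3 : (3 : k) = 0 := by exact_mod_cast CharP.cast_eq_zero k 3
  have hU2 :
      C c6 * (X 0 ^ 0 * X 1 ^ 6) + C (-c5 - 6*c6) * (X 0 ^ 1 * X 1 ^ 5)
        + C (c4 + 5*c5 + 15*c6) * (X 0 ^ 2 * X 1 ^ 4)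
        + C (-c3 - 4*c4 - 10*c5 - 20*c6) * (X 0 ^ 3 * X 1 ^ 3)
        + C (c2 + 3*c3 + 6*c4 + 10*c5 + 15*c6) * (X 0 ^ 4 * X 1 ^ 2)
        + C (-c1 - 2*c2 - 3*c3 - 4*c4 - 5*c5 - 6*c6) * (X 0 ^ 5 * X 1 ^ 1)
        + C (c0 + c1 + c2 + c3 + c4 + c5 + c6) * (X 0 ^ 6 * X 1 ^ 0)
      = (C c0 * (X 0 ^ 0 * X 1 ^ 6) + C c1 * (X 0 ^ 1 * X 1 ^ 5)
        + C c2 * (X 0 ^ 2 * X 1 ^ 4) + C c3 * (X 0 ^ 3 * X 1 ^ 3)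
        + C c4 * (X 0 ^ 4 * X 1 ^ 2) + C c5 * (X 0 ^ 5 * X 1 ^ 1)
        + C c6 * (X 0 ^ 6 * X 1 ^ 0) : MvPolynomial (Fin 2) k) := by
    simp only [map_add, map_sub, map_mul, map_neg, map_ofNat]
    linear_combination hU
  have hV2 :
      C c6 * (X 0 ^ 0 * X 1 ^ 6) + C c5 * (X 0 ^ 1 * X 1 ^ 5)
        + C c4 * (X 0 ^ 2 * X 1 ^ 4) + C c3 * (X 0 ^ 3 * X 1 ^ 3)
        + C c2 * (X 0 ^ 4 * X 1 ^ 2) + C c1 * (X 0 ^ 5 * X 1 ^ 1)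
        + C c0 * (X 0 ^ 6 * X 1 ^ 0)
      = (C c0 * (X 0 ^ 0 * X 1 ^ 6) + C c1 * (X 0 ^ 1 * X 1 ^ 5)
        + C c2 * (X 0 ^ 2 * X 1 ^ 4) + C c3 * (X 0 ^ 3 * X 1 ^ 3)
        + C c4 * (X 0 ^ 4 * X 1 ^ 2) + C c5 * (X 0 ^ 5 * X 1 ^ 1)
        + C c6 * (X 0 ^ 6 * X 1 ^ 0) : MvPolynomial (Fin 2) k) := by
    linear_combination hV
  -- extract scalar equations
  have h06 : c6 = c0 := by
    have h := congrArg (coeff (Finsupp.single 0 0 + Finsupp.single 1 6)) hV2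
    simp only [coeff_add, CXpow_eq, coeff_monomial, dd_eq] at h
    simpa using h
  have h15 : c5 = c1 := by
    have h := congrArg (coeff (Finsupp.single 0 1 + Finsupp.single 1 5)) hV2
    simp only [coeff_add, CXpow_eq, coeff_monomial, dd_eq] at h
    simpa using h
  have h24 : c4 = c2 := by
    have h := congrArg (coeff (Finsupp.single 0 2 + Finsupp.single 1 4)) hV2
    simp only [coeff_add, CXpow_eq, coeff_monomial, dd_eq] at h
    simpa using h
  have hA : -c5 - 6*c6 = c1 := by
    have h := congrArg (coeff (Finsupp.single 0 1 + Finsupp.single 1 5)) hU2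
    simp only [coeff_add, CXpow_eq, coeff_monomial, dd_eq] at h
    simp at h
    linear_combination h
  have hB : -c3 - 4*c4 - 10*c5 - 20*c6 = c3 := by
    have h := congrArg (coeff (Finsupp.single 0 3 + Finsupp.single 1 3)) hU2
    simp only [coeff_add, CXpow_eq, coeff_monomial, dd_eq] at h
    simp at h
    linear_combination h
  have hc1 : c1 = 0 := by
    linear_combination hA + h15 + (c1 + 2*c6) * h3
  have hc5 : c5 = 0 := by linear_combination h15 + hc1
  have hc3 : c3 = c2 + 2*c0 := by
    linear_combination hB + h24 + 2*h06 + hc5 + (c3 + c4 + 3*c5 + 6*c6) * h3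
  refine ⟨c2, c0, ?_⟩
  rw [hF, hc1, hc5, hc3, h06, h24]
  simp only [map_zero, zero_mul, add_zero, zero_add]
  ring
end

section
/- Let k be a perfect field of characteristic 3 and t ∈ k, t ≠ 0, with t* ∈ k the unique cube root of t. Then the polynomial (1/t*)·x^6 + x^4 + x^2 + 1 is squarefree over k̄ if and only if the corresponding curve y^2 = (1/t*)·x^6 + x^4 + x^2 + 1 is a genus 2 curve; and squarefreeness holds whenever the original D12-moduli conditions hold, in particular whenever t ∉ {0, −1} (equivalently the discriminant of (1/t*)·x^6 + x^4 + x^2 + 1, computed in characteristic 3, is nonzero for these t*). -/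
open Polynomial

/-! In characteristic 3 the derivative of `f = a X⁶ + X⁴ + X² + 1` collapses to
`X³ - X = X (X - 1) (X + 1)`, whose roots `0, 1, -1` give `f(0) = 1` and `f(±1) = a + 3 = a`.
So for `a ≠ 0` the polynomial `f` is coprime to `f'`, hence separable and squarefree. -/

theorem Polynomial.isCoprime_X_sub_C_of_eval_ne_zero {K : Type*} [Field K] {p : K[X]} {c : K}
    (h : p.eval c ≠ 0) : IsCoprime p (X - C c) :=
  ((irreducible_X_sub_C c).coprime_iff_not_dvd.2 (mt dvd_iff_isRoot.1 h)).symm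

section CharThree

variable {K : Type*} [Field K] [CharP K 3]

theorem derivative_sextic_eq_of_charP_three (a : K) :
    derivative (C a * X ^ 6 + X ^ 4 + X ^ 2 + 1 : K[X]) =
      (X - C 0) * (X - C 1) * (X - C (-1)) := by
  have h3 : (3 : K[X]) = 0 := CharP.cast_eq_zero K[X] 3
  simp only [derivative_add, derivative_mul, derivative_C, derivative_X_pow, derivative_one,
    map_zero, map_one, map_neg, C_eq_natCast]
  push_cast
  linear_combination (2 * C a * X ^ 5 + X ^ 3 + X) * h3

theorem separable_sextic_of_charP_three {a : K} (ha : a ≠ 0) :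
    (C a * X ^ 6 + X ^ 4 + X ^ 2 + 1 : K[X]).Separable := by
  have h3 : (3 : K) = 0 := CharP.cast_eq_zero K 3
  rw [Separable, derivative_sextic_eq_of_charP_three]
  refine .mul_right (.mul_right ?_ ?_) ?_ <;> apply isCoprime_X_sub_C_of_eval_ne_zero <;>
    simp only [eval_add, eval_mul, eval_pow, eval_C, eval_X, eval_one]
  · norm_num
  all_goals exact fun h ↦ ha (by linear_combination h - h3)

end CharThree

theorem stmt_15_general {k K : Type*} [Field k] [CharP k 3] [Field K]
    [Algebra k K] (t tstar : k) (ht : t ≠ 0)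
    (htstar : tstar ^ 3 = t) :
    Squarefree ((C (algebraMap k K (1 / tstar)) * X ^ 6 + X ^ 4 + X ^ 2 + 1 :
      Polynomial K)) := by
  have : CharP K 3 := charP_of_injective_algebraMap (algebraMap k K).injective 3
  have htstar_ne : tstar ≠ 0 := by
    rintro rfl
    exact ht (by rw [← htstar]; ring)
  refine (separable_sextic_of_charP_three ?_).squarefree
  simpa using htstar_ne

/-- over a perfect field of characteristic 3, for `t ∉ {0, −1}` with cube
root `t*`, the polynomial `(1/t*)·x⁶ + x⁴ + x² + 1` is squarefree over the algebraic
closure, i.e. `y² = (1/t*)·x⁶ + x⁴ + x² + 1` is a genus 2 curve. -/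
theorem stmt_15 {k K : Type*} [Field k] [CharP k 3] [PerfectRing k 3] [Field K]
    [Algebra k K] [IsAlgClosure k K] (t tstar : k) (ht : t ≠ 0)
    (htstar : tstar ^ 3 = t) (htm1 : t ≠ -1) :
    Squarefree ((C (algebraMap k K (1 / tstar)) * X ^ 6 + X ^ 4 + X ^ 2 + 1 :
      Polynomial K)) :=
  stmt_15_general t tstar ht htstar
end
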